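/- arXiv:1612.07563 — 2 statements merged into one kernel-verified Lean document; each statement's English description precedes it below -/
import Mathlib

section
/- Let α > 0 be a non-integer real number, let m = ⌈α⌉, and let x > 0. Then the left-sided Riemann–Liouville fractional derivative of order α (with base point 0) of the Gaussian function τ ↦ exp(-τ²/2) satisfies: the m-th iterated derivative at x of y ↦ (1/Γ(m-α)) ∫_0^y (y - τ)^(m-α-1) exp(-τ²/2) dτ equals Σ_{n=0}^{∞} ((-1)^n (2n)! / (2^n · n! · Γ(2n - α + 1))) · x^(2n-α). -/
open MeasureTheory Real

open scoped Nat

/-!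
With `β = m - α > 0`, expanding `exp (-τ ^ 2 / 2)` into its power series and integrating termwise
against `(y - τ) ^ (β - 1)` (each term is a Beta integral) writes the fractional integral of order
`β` as `∑ cₙ y ^ (2n + β)`, absolutely convergent for every `y > 0`. Such a series can be
differentiated termwise on `(0, ∞)` any number of times, and `m` differentiations multiply `cₙ` by
the falling factorial `(2n + β) ⋯ (2n + β - m + 1) = Γ(2n + β + 1) / Γ(2n - α + 1)`, which turns
the `Γ(2n + β + 1)` in the denominator of `cₙ` into `Γ(2n - α + 1)`.
-/

theorem Real.Gamma_add_one_eq_descPochhammer_mul {r : ℝ} {k : ℕ} (hr : ∀ j < k, r ≠ j) :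
    Gamma (r + 1) = (descPochhammer ℝ k).eval r * Gamma (r + 1 - k) := by
  induction k with
  | zero => simp
  | succ k ih =>
    rw [ih fun j hj => hr j (hj.trans k.lt_succ_self), descPochhammer_succ_eval,
      show r + 1 - k = (r - k) + 1 by ring, Gamma_add_one (sub_ne_zero.2 (hr k k.lt_succ_self))]
    push_cast
    ring_nf

theorem Real.Gamma_add_one_mul_factorial_le {β : ℝ} (hβ : 0 ≤ β) (k : ℕ) :
    Gamma (β + 1) * k ! ≤ Gamma (k + β + 1) := by
  induction k with
  | zero => simp
  | succ k ih =>
    have hne : (k + β + 1 : ℝ) ≠ 0 := by positivity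
    rw [Nat.factorial_succ, show ((k + 1 : ℕ) : ℝ) + β + 1 = (k + β + 1) + 1 by push_cast; ring,
      Gamma_add_one hne, Nat.cast_mul, ← mul_assoc, mul_comm (Gamma _), mul_assoc]
    gcongr
    push_cast; linarith

theorem integral_rpow_mul_sub_rpow {s t y : ℝ} (hs : 0 < s) (ht : 0 < t) (hy : 0 < y) :
    ∫ τ in (0:ℝ)..y, τ ^ (s - 1) * (y - τ) ^ (t - 1) =
      Gamma s * Gamma t / Gamma (s + t) * y ^ (s + t - 1) := by
  have hΓ : Complex.Gamma (s + t) ≠ 0 := by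
    rw [← Complex.ofReal_add, Complex.Gamma_ofReal, Complex.ofReal_ne_zero]
    exact (Gamma_pos_of_pos (add_pos hs ht)).ne'
  have hbeta := Complex.Gamma_mul_Gamma_eq_betaIntegral (s := s) (t := t)
    (by simpa using hs) (by simpa using ht)
  have hB : Complex.betaIntegral s t =
      Complex.Gamma s * Complex.Gamma t / Complex.Gamma (s + t) := by
    rw [eq_div_iff hΓ, hbeta, mul_comm]
  have hcast : ∀ τ ∈ Set.uIcc 0 y, ((τ ^ (s - 1) * (y - τ) ^ (t - 1) : ℝ) : ℂ) =
      (τ : ℂ) ^ ((s : ℂ) - 1) * ((y : ℂ) - τ) ^ ((t : ℂ) - 1) := by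
    intro τ hτ
    rw [Set.uIcc_of_le hy.le] at hτ
    rw [Complex.ofReal_mul, Complex.ofReal_cpow hτ.1, Complex.ofReal_cpow (sub_nonneg.2 hτ.2)]
    push_cast
    ring
  apply Complex.ofReal_injective
  rw [← intervalIntegral.integral_ofReal, intervalIntegral.integral_congr hcast,
    Complex.betaIntegral_scaled _ _ hy, hB]
  push_cast
  rw [Complex.ofReal_cpow hy.le, ← Complex.Gamma_ofReal, ← Complex.Gamma_ofReal,
    ← Complex.Gamma_ofReal]
  push_cast
  ring

theorem integral_pow_mul_sub_rpow (k : ℕ) {β y : ℝ} (hβ : 0 < β) (hy : 0 < y) :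
    ∫ τ in (0:ℝ)..y, τ ^ k * (y - τ) ^ (β - 1) =
      k ! * Gamma β / Gamma (k + β + 1) * y ^ (k + β) := by
  have h := integral_rpow_mul_sub_rpow (s := k + 1) (by positivity) hβ hy
  rw [Gamma_nat_eq_factorial, show (k : ℝ) + 1 + β = k + β + 1 by ring,
    show (k : ℝ) + β + 1 - 1 = k + β by ring] at h
  simpa using h

noncomputable def riemannLiouvilleIntegral (β : ℝ) (f : ℝ → ℝ) (y : ℝ) : ℝ :=
  1 / Gamma β * ∫ τ in (0:ℝ)..y, (y - τ) ^ (β - 1) * f τ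

theorem hasSum_riemannLiouvilleIntegral_tsum {a : ℕ → ℝ} {e : ℕ → ℕ} {β y : ℝ} (hβ : 0 < β)
    (hy : 0 < y) (ha : Summable fun n => |a n| * y ^ e n) :
    HasSum (fun n => a n * (e n)! / Gamma (e n + β + 1) * y ^ (e n + β))
      (riemannLiouvilleIntegral β (fun τ => ∑' n, a n * τ ^ e n) y) := by
  set F : ℕ → ℝ → ℝ := fun n τ => a n * (τ ^ e n * (y - τ) ^ (β - 1))
  have hΓβ : 0 < Gamma β := Gamma_pos_of_pos hβ
  have hkernel : IntervalIntegrable (fun τ => (y - τ) ^ (β - 1)) volume 0 y := by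
    simpa using ((intervalIntegral.intervalIntegrable_rpow' (a := 0) (b := y)
      (r := β - 1) (by linarith)).comp_sub_left y).symm
  have hF_int : ∀ n, IntegrableOn (F n) (Set.Ioc 0 y) :=
    fun n => ((hkernel.continuousOn_mul (continuous_pow (e n)).continuousOn).const_mul (a n)).1
  have hF_norm : ∀ n, ∫ τ in Set.Ioc 0 y, ‖F n τ‖ =
      |a n| * ((e n)! * Gamma β / Gamma (e n + β + 1) * y ^ (e n + β)) := by
    intro n
    rw [← integral_pow_mul_sub_rpow (e n) hβ hy, intervalIntegral.integral_of_le hy.le,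
      ← integral_const_mul]
    refine setIntegral_congr_fun measurableSet_Ioc fun τ hτ => ?_
    rw [norm_mul, Real.norm_eq_abs, Real.norm_of_nonneg]
    exact mul_nonneg (pow_nonneg hτ.1.le _) (rpow_nonneg (sub_nonneg.2 hτ.2) _)
  have hF_sum : Summable fun n => ∫ τ in Set.Ioc 0 y, ‖F n τ‖ := by
    refine (ha.mul_right (Gamma β / Gamma (β + 1) * y ^ β)).of_nonneg_of_le
      (fun n => integral_nonneg fun τ => norm_nonneg _) fun n => ?_
    have hbeta_le : (e n)! * Gamma β / Gamma (e n + β + 1) ≤ Gamma β / Gamma (β + 1) := by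
      rw [div_le_div_iff₀ (Gamma_pos_of_pos (by positivity)) (Gamma_pos_of_pos (by positivity)),
        mul_comm _ (Gamma β), mul_assoc]
      exact mul_le_mul_of_nonneg_left (by linarith [Gamma_add_one_mul_factorial_le hβ.le (e n)])
        hΓβ.le
    calc ∫ τ in Set.Ioc 0 y, ‖F n τ‖
        = |a n| * y ^ e n * ((e n)! * Gamma β / Gamma (e n + β + 1) * y ^ β) := by
          rw [hF_norm, rpow_add hy, rpow_natCast]; ring
      _ ≤ |a n| * y ^ e n * (Gamma β / Gamma (β + 1) * y ^ β) := by gcongr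
  have hterm : ∀ n, 1 / Gamma β * ∫ τ in Set.Ioc 0 y, F n τ =
      a n * (e n)! / Gamma (e n + β + 1) * y ^ (e n + β) := by
    intro n
    rw [← intervalIntegral.integral_of_le hy.le, intervalIntegral.integral_const_mul,
      integral_pow_mul_sub_rpow (e n) hβ hy]
    field_simp
  have hintegrand : ∫ τ in (0:ℝ)..y, (y - τ) ^ (β - 1) * ∑' n, a n * τ ^ e n =
      ∫ τ in Set.Ioc 0 y, ∑' n, F n τ := by
    rw [intervalIntegral.integral_of_le hy.le]
    refine setIntegral_congr_fun measurableSet_Ioc fun τ _ => ?_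
    rw [← tsum_mul_left]
    exact tsum_congr fun n => by ring
  rw [riemannLiouvilleIntegral, hintegrand]
  simpa only [hterm] using
    (hasSum_integral_of_summable_integral_norm hF_int hF_sum).mul_left (1 / Gamma β)

theorem abs_descPochhammer_eval_le {s : ℝ} (hs : 0 ≤ s) (k : ℕ) :
    |(descPochhammer ℝ k).eval s| ≤ (s + k) ^ k := by
  induction k with
  | zero => simp
  | succ k ih =>
    rw [descPochhammer_succ_eval, abs_mul, pow_succ]
    push_cast
    gcongr ?_ * ?_
    · exact ih.trans (pow_le_pow_left₀ (by positivity) (by linarith) k)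
    · rw [abs_le]; constructor <;> linarith [(Nat.cast_nonneg k : (0:ℝ) ≤ k)]

theorem summable_descPochhammer_mul_rpow {c s : ℕ → ℝ} (hs : ∀ n, 0 ≤ s n)
    (hc : ∀ y > 0, Summable fun n => c n * y ^ s n) (k : ℕ) {y : ℝ} (hy : 0 < y) :
    Summable fun n => c n * (descPochhammer ℝ k).eval (s n) * y ^ (s n - k) := by
  refine ((hc (exp 1 * y) (by positivity)).abs.mul_left
    (k ! * exp k * y ^ (-(k : ℝ)))).of_norm_bounded fun n => ?_
  -- polynomial growth of the Pochhammer factor is absorbed by the factor `exp (s n)`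
  have hpoch : |(descPochhammer ℝ k).eval (s n)| ≤ k ! * exp k * exp (s n) := by
    have := pow_div_factorial_le_exp _ (add_nonneg (hs n) k.cast_nonneg) k
    rw [div_le_iff₀ (by positivity)] at this
    rw [mul_assoc, ← exp_add, add_comm (k : ℝ), mul_comm]
    exact (abs_descPochhammer_eval_le (hs n) k).trans this
  calc ‖c n * (descPochhammer ℝ k).eval (s n) * y ^ (s n - k)‖
      = |c n| * |(descPochhammer ℝ k).eval (s n)| * (y ^ s n * y ^ (-(k : ℝ))) := by
        rw [Real.norm_eq_abs, abs_mul, abs_mul, abs_of_pos (rpow_pos_of_pos hy _), sub_eq_add_neg,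
          rpow_add hy]
    _ ≤ |c n| * (k ! * exp k * exp (s n)) * (y ^ s n * y ^ (-(k : ℝ))) := by gcongr
    _ = k ! * exp k * y ^ (-(k : ℝ)) * |c n * (exp 1 * y) ^ s n| := by
        rw [abs_mul, abs_of_pos (rpow_pos_of_pos (by positivity) _), mul_rpow (exp_pos 1).le hy.le,
          exp_one_rpow]
        ring

theorem rpow_le_rpow_add_rpow_of_mem_Icc {a b y : ℝ} (ha : 0 < a) (hy : y ∈ Set.Icc a b)
    (p : ℝ) : y ^ p ≤ a ^ p + b ^ p := by
  rcases le_total 0 p with hp | hp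
  · exact (rpow_le_rpow (ha.le.trans hy.1) hy.2 hp).trans
      (le_add_of_nonneg_left (rpow_nonneg ha.le _))
  · exact (rpow_le_rpow_of_nonpos ha hy.1 hp).trans
      (le_add_of_nonneg_right (rpow_nonneg (ha.le.trans (hy.1.trans hy.2)) _))

theorem hasDerivAt_tsum_rpow {b p : ℕ → ℝ} {x : ℝ} (hx : 0 < x)
    (hb : Summable fun n => b n * x ^ p n)
    (hb' : ∀ y > 0, Summable fun n => b n * p n * y ^ (p n - 1)) :
    HasDerivAt (fun y => ∑' n, b n * y ^ p n) (∑' n, b n * p n * x ^ (p n - 1)) x := by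
  have hx2 : 0 < x / 2 := by positivity
  have hmem : x ∈ Set.Ioo (x / 2) (2 * x) := ⟨by linarith, by linarith⟩
  have habs : ∀ y > 0, ∀ n, |b n * p n * y ^ (p n - 1)| = |b n * p n| * y ^ (p n - 1) :=
    fun y hy n => by rw [abs_mul, abs_of_pos (rpow_pos_of_pos hy _)]
  refine hasDerivAt_tsum_of_isPreconnected
    (u := fun n => |b n * p n| * (x / 2) ^ (p n - 1) + |b n * p n| * (2 * x) ^ (p n - 1))
    (g := fun n y => b n * y ^ p n) (g' := fun n y => b n * p n * y ^ (p n - 1))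
    ?_ isOpen_Ioo isPreconnected_Ioo (fun n y hy => ?_) (fun n y hy => ?_) hmem hb hmem
  · simp only [← habs _ hx2, ← habs (2 * x) (by positivity)]
    exact (hb' _ hx2).abs.add (hb' _ (by positivity)).abs
  · rw [mul_assoc]
    exact (hasDerivAt_rpow_const (Or.inl (hx2.trans hy.1).ne')).const_mul (b n)
  · rw [Real.norm_eq_abs, habs y (hx2.trans hy.1), ← mul_add]
    gcongr
    exact rpow_le_rpow_add_rpow_of_mem_Icc hx2 (Set.Ioo_subset_Icc_self hy) _

theorem iteratedDeriv_tsum_rpow {c s : ℕ → ℝ} (hs : ∀ n, 0 ≤ s n)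
    (hc : ∀ y > 0, Summable fun n => c n * y ^ s n) (k : ℕ) {x : ℝ} (hx : 0 < x) :
    iteratedDeriv k (fun y => ∑' n, c n * y ^ s n) x =
      ∑' n, c n * (descPochhammer ℝ k).eval (s n) * x ^ (s n - k) := by
  induction k generalizing x with
  | zero => simp
  | succ k ih =>
    have hev : iteratedDeriv k (fun y => ∑' n, c n * y ^ s n) =ᶠ[nhds x]
        fun y => ∑' n, c n * (descPochhammer ℝ k).eval (s n) * y ^ (s n - k) :=
      Filter.eventually_of_mem (isOpen_Ioi.mem_nhds hx) fun y hy => ih hy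
    rw [iteratedDeriv_succ, hev.deriv_eq]
    have hderiv := hasDerivAt_tsum_rpow hx (summable_descPochhammer_mul_rpow hs hc k hx)
      (fun y hy => by
        simpa [descPochhammer_succ_eval, sub_sub, mul_assoc] using
          summable_descPochhammer_mul_rpow hs hc (k + 1) hy)
    simpa [descPochhammer_succ_eval, sub_sub, mul_assoc] using hderiv.deriv

theorem Real.hasSum_exp_neg_sq_div_two (τ : ℝ) :
    HasSum (fun n : ℕ => (-1 : ℝ) ^ n / (2 ^ n * n !) * τ ^ (2 * n)) (exp (-τ ^ 2 / 2)) := by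
  have hterm : ∀ n : ℕ, (-1 : ℝ) ^ n / (2 ^ n * n !) * τ ^ (2 * n) = (-τ ^ 2 / 2) ^ n / n ! := by
    intro n
    rw [div_pow, neg_pow (τ ^ 2), pow_mul]
    field_simp
  simp only [hterm, exp_eq_exp_ℝ]
  exact NormedSpace.expSeries_div_hasSum_exp _

theorem hasSum_riemannLiouvilleIntegral_exp_neg_sq_div_two {β y : ℝ} (hβ : 0 < β) (hy : 0 < y) :
    HasSum (fun n : ℕ => (-1 : ℝ) ^ n * (2 * n)! / (2 ^ n * n ! * Gamma (2 * n + β + 1)) *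
      y ^ (2 * n + β)) (riemannLiouvilleIntegral β (fun τ => exp (-τ ^ 2 / 2)) y) := by
  have hsummable : Summable fun n : ℕ => |(-1 : ℝ) ^ n / (2 ^ n * n !)| * y ^ (2 * n) := by
    convert Real.summable_pow_div_factorial (y ^ 2 / 2) using 2 with n
    rw [abs_div, abs_pow, abs_neg, abs_one, one_pow, abs_of_pos (by positivity), div_pow, pow_mul]
    field_simp
  have h := hasSum_riemannLiouvilleIntegral_tsum (e := fun n => 2 * n) hβ hy hsummable
  simp only [fun τ => (hasSum_exp_neg_sq_div_two τ).tsum_eq] at h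
  convert h using 2 with n
  push_cast
  field_simp

theorem rl_derivative_gaussian_zero_general (α : ℝ) (hαni : ∀ j : ℤ, α ≠ j)
    (m : ℕ) (hm : m = ⌈α⌉₊) (x : ℝ) (hx : 0 < x) :
    iteratedDeriv m
      (fun y => (1 / Real.Gamma ((m : ℝ) - α)) *
        ∫ τ in (0 : ℝ)..y, (y - τ) ^ ((m : ℝ) - α - 1) * Real.exp (-τ ^ 2 / 2)) x =
      ∑' n : ℕ,
        ((-1 : ℝ) ^ n * (2 * n).factorial /
          (2 ^ n * n.factorial * Real.Gamma (2 * n - α + 1))) * x ^ (2 * (n : ℝ) - α) := by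
  set β : ℝ := m - α
  have hβ : 0 < β := sub_pos.2 ((hm ▸ Nat.le_ceil α).lt_of_ne (by exact_mod_cast hαni m))
  have hseries := fun y (hy : 0 < y) => hasSum_riemannLiouvilleIntegral_exp_neg_sq_div_two hβ hy
  have hlocal : riemannLiouvilleIntegral β (fun τ => exp (-τ ^ 2 / 2)) =ᶠ[nhds x]
      fun y => ∑' n : ℕ, (-1 : ℝ) ^ n * (2 * n)! / (2 ^ n * n ! * Gamma (2 * n + β + 1)) *
        y ^ (2 * n + β) :=
    Filter.eventually_of_mem (isOpen_Ioi.mem_nhds hx) fun y hy => (hseries y hy).tsum_eq.symm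
  change iteratedDeriv m (riemannLiouvilleIntegral β fun τ => exp (-τ ^ 2 / 2)) x = _
  rw [hlocal.iteratedDeriv_eq, iteratedDeriv_tsum_rpow (fun n => by positivity)
    (fun y hy => (hseries y hy).summable) m hx]
  refine tsum_congr fun n => ?_
  have hΓ := Gamma_add_one_eq_descPochhammer_mul (r := 2 * n + β) (k := m)
    fun j _ h => hαni (2 * n + m - j) (by push_cast; linarith)
  have hne := (hΓ ▸ Gamma_pos_of_pos (by positivity)).ne'
  rw [show 2 * n + β + 1 - m = 2 * n - α + 1 by ring] at hΓ hne
  rw [show 2 * n + β - m = 2 * n - α by ring, hΓ]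
  field_simp [(mul_ne_zero_iff.1 hne).1]

theorem rl_derivative_gaussian_zero (α : ℝ) (hα : 0 < α) (hαni : ∀ j : ℤ, α ≠ j)
    (m : ℕ) (hm : m = ⌈α⌉₊) (x : ℝ) (hx : 0 < x) :
    iteratedDeriv m
      (fun y => (1 / Real.Gamma ((m : ℝ) - α)) *
        ∫ τ in (0 : ℝ)..y, (y - τ) ^ ((m : ℝ) - α - 1) * Real.exp (-τ ^ 2 / 2)) x =
      ∑' n : ℕ,
        ((-1 : ℝ) ^ n * (2 * n).factorial /
          (2 ^ n * n.factorial * Real.Gamma (2 * n - α + 1))) * x ^ (2 * (n : ℝ) - α) :=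
  rl_derivative_gaussian_zero_general α hαni m hm x hx
end

section
/- Let α > 0 and let a < x be real numbers. Then the left-sided Riemann–Liouville fractional integral of order α of the Gaussian function τ ↦ exp(-τ²/2) satisfies (1/Γ(α)) ∫_a^x (x - τ)^(α-1) exp(-τ²/2) dτ = (x - a)^α · Σ_{n=0}^{∞} ((-1)^n (2n)! / (2^n · n!)) · ( Σ_{k=0}^{2n} a^(2n-k) (x - a)^k / ((2n - k)! · Γ(α + k + 1)) ), where the outer series converges. -/
open MeasureTheory Real
open scoped Nat

/-!
Expand `exp (-τ ^ 2 / 2)` in its power series and integrate termwise against the integrable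
weight `(x - τ) ^ (α - 1)`; dominated convergence applies because on `[a, x]` the series of
absolute values is bounded by `(x - τ) ^ (α - 1) * exp (max a² x² / 2)`. The `n`-th term is the
Riemann–Liouville integral of `τ ^ (2 n)`. Writing `τ = a + (τ - a)` and expanding binomially
reduces it to the Beta integrals `∫ τ in a..x, (x - τ) ^ (α - 1) * (τ - a) ^ k`, which equal
`Γ(α) k! (x - a) ^ (α + k) / Γ(α + k + 1)`.
-/

theorem integral_rpow_mul_one_sub_rpow {p q : ℝ} (hp : 0 < p) (hq : 0 < q) :
    ∫ t in (0 : ℝ)..1, t ^ (p - 1) * (1 - t) ^ (q - 1) = Gamma p * Gamma q / Gamma (p + q) := by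
  apply Complex.ofReal_injective
  have hB := Complex.betaIntegral_eq_Gamma_mul_div p q (by simpa) (by simpa)
  rw [← Complex.ofReal_add, Complex.Gamma_ofReal, Complex.Gamma_ofReal,
    Complex.Gamma_ofReal] at hB
  push_cast
  rw [← hB, Complex.betaIntegral, ← intervalIntegral.integral_ofReal]
  refine intervalIntegral.integral_congr fun t ht => ?_
  rw [Set.uIcc_of_le zero_le_one] at ht
  push_cast
  rw [Complex.ofReal_cpow ht.1, Complex.ofReal_cpow (sub_nonneg.2 ht.2)]
  push_cast
  rfl

theorem integral_sub_rpow_mul_sub_rpow {α β a x : ℝ} (hα : 0 < α) (hβ : 0 < β)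
    (hax : a < x) :
    ∫ τ in a..x, (x - τ) ^ (α - 1) * (τ - a) ^ (β - 1) =
      Gamma α * Gamma β / Gamma (α + β) * (x - a) ^ (α + β - 1) := by
  set c := x - a
  have hc : 0 < c := sub_pos.2 hax
  have hsub := intervalIntegral.smul_integral_comp_add_mul (a := 0) (b := 1)
    (fun τ => (x - τ) ^ (α - 1) * (τ - a) ^ (β - 1)) c a
  rw [mul_zero, add_zero, mul_one, add_sub_cancel] at hsub
  rw [← hsub, smul_eq_mul, ← intervalIntegral.integral_const_mul]
  have hscale : ∀ t ∈ Set.uIcc (0 : ℝ) 1,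
      c * ((x - (a + c * t)) ^ (α - 1) * (a + c * t - a) ^ (β - 1)) =
        c ^ (α + β - 1) * (t ^ (β - 1) * (1 - t) ^ (α - 1)) := by
    intro t ht
    rw [Set.uIcc_of_le zero_le_one] at ht
    rw [show x - (a + c * t) = c * (1 - t) by ring, add_sub_cancel_left,
      mul_rpow hc.le (sub_nonneg.2 ht.2), mul_rpow hc.le ht.1,
      show α + β - 1 = 1 + (α - 1) + (β - 1) by ring, rpow_add hc, rpow_add hc, rpow_one]
    ring
  rw [intervalIntegral.integral_congr hscale, intervalIntegral.integral_const_mul,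
    integral_rpow_mul_one_sub_rpow hβ hα, add_comm β]
  ring

theorem intervalIntegrable_sub_rpow {α : ℝ} (hα : 0 < α) (x a b : ℝ) :
    IntervalIntegrable (fun τ => (x - τ) ^ (α - 1)) volume a b := by
  simpa using (intervalIntegral.intervalIntegrable_rpow' (a := x - a) (b := x - b)
    (by linarith : (-1 : ℝ) < α - 1)).comp_sub_left x

theorem integral_sub_rpow_mul_pow {α a x : ℝ} (hα : 0 < α) (hax : a < x) (m : ℕ) :
    ∫ τ in a..x, (x - τ) ^ (α - 1) * τ ^ m =
      Gamma α * (x - a) ^ α * (m ! * ∑ k ∈ Finset.range (m + 1),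
        a ^ (m - k) * (x - a) ^ k / ((m - k)! * Gamma (α + k + 1))) := by
  have hbinom : ∀ τ : ℝ, (x - τ) ^ (α - 1) * τ ^ m = ∑ k ∈ Finset.range (m + 1),
      (m.choose k * a ^ (m - k)) * ((x - τ) ^ (α - 1) * (τ - a) ^ ((k + 1 : ℝ) - 1)) := by
    intro τ
    simp_rw [add_sub_cancel_right, rpow_natCast]
    rw [← sub_add_cancel τ a, add_pow, Finset.mul_sum, add_sub_cancel_right]
    exact Finset.sum_congr rfl fun k _ => by ring
  have hint : ∀ k ∈ Finset.range (m + 1), IntervalIntegrable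
      (fun τ =>
        (m.choose k * a ^ (m - k)) * ((x - τ) ^ (α - 1) * (τ - a) ^ ((k + 1 : ℝ) - 1)))
      volume a x := fun k _ => by
    simp_rw [add_sub_cancel_right, rpow_natCast]
    exact ((intervalIntegrable_sub_rpow hα x a x).mul_continuousOn (by fun_prop)).const_mul _
  simp_rw [hbinom]
  rw [intervalIntegral.integral_finsetSum hint, Finset.mul_sum, Finset.mul_sum]
  refine Finset.sum_congr rfl fun k hk => ?_
  have hkm : k ≤ m := Nat.lt_succ_iff.mp (Finset.mem_range.mp hk)
  have hchoose : (m.choose k : ℝ) * k ! * (m - k)! = m ! := by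
    exact_mod_cast Nat.choose_mul_factorial_mul_factorial hkm
  have hΓ : Gamma (α + k + 1) ≠ 0 := (Gamma_pos_of_pos (by positivity)).ne'
  rw [intervalIntegral.integral_const_mul, integral_sub_rpow_mul_sub_rpow hα (by positivity) hax,
    Gamma_nat_eq_factorial k, ← add_assoc, add_sub_cancel_right, rpow_add (sub_pos.2 hax),
    rpow_natCast]
  field_simp
  linear_combination a ^ (m - k) * (x - a) ^ k * (x - a) ^ α * hchoose

theorem hasSum_integral_mul_pow_div_factorial {w g : ℝ → ℝ} {a b : ℝ}
    (hw : IntervalIntegrable w volume a b) (hg : ContinuousOn g (Set.uIcc a b)) :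
    HasSum (fun n : ℕ => ∫ t in a..b, w t * (g t ^ n / n !))
      (∫ t in a..b, w t * exp (g t)) := by
  obtain ⟨M, hM⟩ := isCompact_uIcc.exists_bound_of_continuousOn hg
  have hexp : ∀ y : ℝ, HasSum (fun n : ℕ => y ^ n / n !) (exp y) := fun y => by
    simpa [Real.exp_eq_exp_ℝ] using NormedSpace.expSeries_div_hasSum_exp y
  refine intervalIntegral.hasSum_integral_of_dominated_convergence
    (fun n t => ‖w t‖ * (M ^ n / n !)) (fun n => ?_) (fun n => ?_)
    (.of_forall fun t _ => (hexp M).summable.mul_left _) ?_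
    (.of_forall fun t _ => (hexp (g t)).mul_left (w t))
  · exact hw.def'.aestronglyMeasurable.mul
      ((((hg.pow n).div_const _).mono Set.uIoc_subset_uIcc).aestronglyMeasurable measurableSet_uIoc)
  · refine .of_forall fun t ht => ?_
    rw [norm_mul, norm_div, norm_pow, RCLike.norm_natCast]
    gcongr
    exact hM t (Set.uIoc_subset_uIcc ht)
  · simp_rw [tsum_mul_left, (hexp M).tsum_eq]
    exact hw.norm.mul_const _

theorem rl_integral_gaussian (α : ℝ) (hα : 0 < α) (a x : ℝ) (hax : a < x) :
    Summable (fun n : ℕ =>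
      ((-1 : ℝ) ^ n * (2 * n).factorial / (2 ^ n * n.factorial)) *
        ∑ k ∈ Finset.range (2 * n + 1),
          a ^ (2 * n - k) * (x - a) ^ k / ((2 * n - k).factorial * Real.Gamma (α + k + 1))) ∧
    (1 / Real.Gamma α) * ∫ τ in a..x, (x - τ) ^ (α - 1) * Real.exp (-τ ^ 2 / 2) =
      (x - a) ^ α *
        ∑' n : ℕ,
          ((-1 : ℝ) ^ n * (2 * n).factorial / (2 ^ n * n.factorial)) *
            ∑ k ∈ Finset.range (2 * n + 1),
              a ^ (2 * n - k) * (x - a) ^ k /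
                ((2 * n - k).factorial * Real.Gamma (α + k + 1)) := by
  have hΓ : Gamma α ≠ 0 := (Gamma_pos_of_pos hα).ne'
  have hxa : (x - a) ^ α ≠ 0 := (rpow_pos_of_pos (sub_pos.2 hax) α).ne'
  have hC : Gamma α * (x - a) ^ α ≠ 0 := mul_ne_zero hΓ hxa
  have hseries := hasSum_integral_mul_pow_div_factorial (g := fun τ => -τ ^ 2 / 2)
    (intervalIntegrable_sub_rpow hα x a x) (by fun_prop)
  have hterm : ∀ n : ℕ, ∫ τ in a..x, (x - τ) ^ (α - 1) * ((-τ ^ 2 / 2) ^ n / n !) =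
      Gamma α * (x - a) ^ α * (((-1 : ℝ) ^ n * (2 * n)! / (2 ^ n * n !)) *
        ∑ k ∈ Finset.range (2 * n + 1),
          a ^ (2 * n - k) * (x - a) ^ k / ((2 * n - k)! * Gamma (α + k + 1))) := by
    intro n
    have hpow : ∀ τ : ℝ, (x - τ) ^ (α - 1) * ((-τ ^ 2 / 2) ^ n / n !) =
        (-1) ^ n / (2 ^ n * n !) * ((x - τ) ^ (α - 1) * τ ^ (2 * n)) := fun τ => by
      rw [neg_div, neg_pow, div_pow, pow_mul]
      ring
    simp_rw [hpow]
    rw [intervalIntegral.integral_const_mul, integral_sub_rpow_mul_pow hα hax]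
    ring
  simp_rw [hterm] at hseries
  rw [← mul_div_cancel₀ (∫ τ in a..x, _) hC, hasSum_mul_left_iff hC] at hseries
  refine ⟨hseries.summable, ?_⟩
  rw [hseries.tsum_eq]
  field_simp
end
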